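/- arXiv:1403.3831 — 3 statements merged into one kernel-verified Lean document; each statement's English description precedes it below -/
import Mathlib

section
/- Let M = {1/n : n ∈ ℕ, n ≥ 1} ∪ {0} ⊆ ℝ with the standard metric ρ(x,y) = |x−y|. Then there is no minimal spanning tree on (M, ρ). -/
open scoped ENNReal

namespace MSTPaper

variable {M : Type*}

/-- The length of an edge `e` of a graph on a metric space: the extended
distance between its endpoints. -/
noncomputable def edgeLen [MetricSpace M] (e : Sym2 M) : ℝ≥0∞ :=
  Sym2.lift ⟨fun x y => edist x y, fun x y => edist_comm x y⟩ e

/-- The length of a graph: the (possibly infinite) sum of the lengths of its edges. -/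
noncomputable def graphLen [MetricSpace M] (G : SimpleGraph M) : ℝ≥0∞ :=
  ∑' e : G.edgeSet, edgeLen (e : Sym2 M)

/-- The distance between two subsets of a metric space. -/
noncomputable def setDist [MetricSpace M] (A B : Set M) : ℝ≥0∞ :=
  ⨅ x ∈ A, ⨅ y ∈ B, edist x y

/-- A minimal spanning tree on the metric space `M`: a spanning tree of finite
length whose length equals the infimum of lengths of all spanning trees on `M`. -/
def IsMST [MetricSpace M] (T : SimpleGraph M) : Prop :=
  T.IsTree ∧ graphLen T < ⊤ ∧ ∀ T' : SimpleGraph M, T'.IsTree → graphLen T ≤ graphLen T'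

/-- An edge `uv` of `G` is exact if its length equals the distance between the
two connected components obtained by removing it. -/
def ExactEdge [MetricSpace M] (G : SimpleGraph M) (u v : M) : Prop :=
  edist u v = setDist {x | (G.deleteEdges {s(u,v)}).Reachable u x}
                      {x | (G.deleteEdges {s(u,v)}).Reachable v x}

/-! In a minimal spanning tree every edge `uv` satisfies `ρ(u, v) ≤ max (ρ(x, u)) (ρ(x, v))`
for every point `x`: deleting `uv` cuts the tree in two, `x` lies on one side, and exchanging
`uv` for whichever of `xv`, `ux` crosses the cut gives a spanning tree, which cannot be shorter.
In `M` the vertex `0` has a neighbour `w = 1/m`, and `w/2 = 1/(2m) ∈ M` is at distance `w/2`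
from both endpoints of that edge. -/

end MSTPaper

namespace SimpleGraph

variable {V : Type*} {H : SimpleGraph V} {u v a b : V}

theorem deleteEdges_sup_edge (h : H.Adj u v) : H.deleteEdges {s(u, v)} ⊔ edge u v = H := by
  ext x y
  simp only [sup_adj, deleteEdges_adj, edge_adj, Set.mem_singleton_iff, Sym2.eq_iff]
  constructor
  · rintro (⟨h, -⟩ | ⟨⟨rfl, rfl⟩ | ⟨rfl, rfl⟩, -⟩)
    exacts [h, h, h.symm]
  · intro hxy
    by_cases he : x = u ∧ y = v ∨ x = v ∧ y = u
    · exact .inr ⟨he, hxy.ne⟩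
    · exact .inl ⟨hxy, he⟩

theorem Walk.reachable_deleteEdges_or {c : V} (p : H.Walk a c) :
    (H.deleteEdges {s(u, v)}).Reachable a c ∨ (H.deleteEdges {s(u, v)}).Reachable u c ∨
      (H.deleteEdges {s(u, v)}).Reachable v c := by
  induction p with
  | nil => exact .inl .rfl
  | @cons a b c hab p ih =>
    by_cases he : s(a, b) = s(u, v)
    · have hb : b = u ∨ b = v := by aesop
      rcases hb with rfl | rfl <;> tauto
    · have hab' : (H.deleteEdges {s(u, v)}).Adj a b := (deleteEdges_adj ..).2 ⟨hab, he⟩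
      exact ih.imp_left hab'.reachable.trans

theorem Connected.reachable_deleteEdges_or (hH : H.Connected) (u v c : V) :
    (H.deleteEdges {s(u, v)}).Reachable u c ∨ (H.deleteEdges {s(u, v)}).Reachable v c := by
  obtain ⟨p⟩ := hH.preconnected u c
  rcases p.reachable_deleteEdges_or (u := u) (v := v) with h | h | h
  exacts [.inl h, .inl h, .inr h]

theorem IsTree.deleteEdges_sup_edge (hH : H.IsTree) (huv : H.Adj u v)
    (ha : (H.deleteEdges {s(u, v)}).Reachable u a) (hb : (H.deleteEdges {s(u, v)}).Reachable v b) :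
    (H.deleteEdges {s(u, v)} ⊔ edge a b).IsTree := by
  set G := H.deleteEdges {s(u, v)}
  have hbridge : ¬G.Reachable u v := isAcyclic_iff_forall_adj_isBridge.1 hH.isAcyclic huv
  have hab : ¬G.Reachable a b := fun h => hbridge (ha.trans (h.trans hb.symm))
  have hle : G ≤ G ⊔ edge a b := le_sup_left
  have huv_reach : (G ⊔ edge a b).Reachable u v := by
    have hab' : (G ⊔ edge a b).Adj a b :=
      .inr ((edge_adj ..).2 ⟨.inl ⟨rfl, rfl⟩, fun h => hab (h ▸ .rfl)⟩)
    exact (ha.mono hle).trans (hab'.reachable.trans (hb.mono hle).symm)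
  have hconn : ∀ c, (G ⊔ edge a b).Reachable u c := fun c =>
    (hH.connected.reachable_deleteEdges_or u v c).elim (·.mono hle)
      (huv_reach.trans <| ·.mono hle)
  exact ⟨(connected_iff_exists_forall_reachable _).2 ⟨u, hconn⟩,
    (hH.isAcyclic.anti (deleteEdges_le _)).sup_edge_of_not_reachable hab⟩

end SimpleGraph

namespace MSTPaper

open SimpleGraph

variable {M : Type*} [MetricSpace M]

theorem graphLen_sup_edge {G : SimpleGraph M} {a b : M} (hab : a ≠ b) (hn : ¬G.Adj a b) :
    graphLen (G ⊔ edge a b) = graphLen G + edist a b := by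
  have hdisj : Disjoint G.edgeSet {s(a, b)} := Set.disjoint_singleton_right.2 hn
  rw [graphLen, tsum_congr_set_coe _ (by rw [edgeSet_sup, edgeSet_edge_of_ne hab]),
    ENNReal.summable.tsum_union_disjoint hdisj ENNReal.summable, tsum_singleton]
  rfl

theorem graphLen_deleteEdges_add {T : SimpleGraph M} {u v : M} (huv : T.Adj u v) :
    graphLen (T.deleteEdges {s(u, v)}) + edist u v = graphLen T := by
  conv_rhs => rw [← deleteEdges_sup_edge huv]
  exact (graphLen_sup_edge huv.ne (by simp)).symm

theorem IsMST.edist_le_of_reachable_deleteEdges {T : SimpleGraph M} (hT : IsMST T) {u v a b : M}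
    (huv : T.Adj u v) (ha : (T.deleteEdges {s(u, v)}).Reachable u a)
    (hb : (T.deleteEdges {s(u, v)}).Reachable v b) : edist u v ≤ edist a b := by
  set G := T.deleteEdges {s(u, v)}
  have hab : ¬G.Reachable a b := fun h =>
    isAcyclic_iff_forall_adj_isBridge.1 hT.1.isAcyclic huv (ha.trans (h.trans hb.symm))
  have hG : graphLen G ≠ ⊤ :=
    ne_top_of_le_ne_top hT.2.1.ne (graphLen_deleteEdges_add huv ▸ le_self_add)
  have hT' := hT.2.2 _ (hT.1.deleteEdges_sup_edge huv ha hb)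
  rwa [← graphLen_deleteEdges_add huv, graphLen_sup_edge (by rintro rfl; exact hab .rfl)
    (fun h => hab h.reachable), ENNReal.add_le_add_iff_left hG] at hT'

theorem IsMST.dist_le_max {T : SimpleGraph M} (hT : IsMST T) {u v : M} (huv : T.Adj u v) (x : M) :
    dist u v ≤ max (dist x u) (dist x v) := by
  rcases hT.1.connected.reachable_deleteEdges_or u v x with h | h
  · have := hT.edist_le_of_reachable_deleteEdges huv h .rfl
    rw [edist_dist, edist_dist, ENNReal.ofReal_le_ofReal_iff dist_nonneg] at this
    exact this.trans (le_max_right _ _)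
  · have := hT.edist_le_of_reachable_deleteEdges huv .rfl h
    rw [edist_dist, edist_dist, ENNReal.ofReal_le_ofReal_iff dist_nonneg, dist_comm u x] at this
    exact this.trans (le_max_left _ _)

theorem half_mem_harmonic {w : ℝ} (hw : w = 0 ∨ ∃ n : ℕ, 1 ≤ n ∧ w = 1 / (n : ℝ)) :
    w / 2 = 0 ∨ ∃ n : ℕ, 1 ≤ n ∧ w / 2 = 1 / (n : ℝ) := by
  rcases hw with rfl | ⟨n, hn, rfl⟩
  · simp
  · exact .inr ⟨2 * n, by omega, by push_cast; ring⟩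

/-- The set `{1/n : n ≥ 1} ∪ {0} ⊆ ℝ` admits no minimal spanning tree. -/
theorem no_mst_harmonic_with_zero :
    ¬ ∃ T : SimpleGraph ({x : ℝ | x = 0 ∨ ∃ n : ℕ, 1 ≤ n ∧ x = 1 / (n : ℝ)}),
      IsMST T := by
  rintro ⟨T, hT⟩
  let zero : {x : ℝ | x = 0 ∨ ∃ n : ℕ, 1 ≤ n ∧ x = 1 / (n : ℝ)} := ⟨0, .inl rfl⟩
  have : Nontrivial {x : ℝ | x = 0 ∨ ∃ n : ℕ, 1 ≤ n ∧ x = 1 / (n : ℝ)} :=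
    ⟨zero, ⟨1, .inr ⟨1, le_rfl, by simp⟩⟩, by simp [zero]⟩
  obtain ⟨w, hw⟩ := hT.1.connected.preconnected.exists_adj_of_nontrivial zero
  have hw0 : (w : ℝ) ≠ 0 := fun h => hw.ne (Subtype.ext h.symm)
  have hmax := hT.dist_le_max hw ⟨w / 2, half_mem_harmonic w.2⟩
  simp only [Subtype.dist_eq, Real.dist_eq, zero, zero_sub, sub_zero, abs_neg,
    show (w : ℝ) / 2 - w = -(w / 2) by ring, max_self, abs_div, abs_two] at hmax
  linarith [abs_pos.2 hw0]

end MSTPaper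
end

section
/- Let (M, ρ) be a metric space with M infinite. If there exist x, y ∈ M with ρ(x, y) = mst(M, ρ), where mst(M, ρ) denotes the infimum of lengths of spanning trees on M, then no minimal spanning tree on (M, ρ) exists. -/
open scoped ENNReal

namespace MSTPaper

variable {M : Type*}

/-!
A connected graph of finite length on an infinite metric space is strictly longer than any
distance `ρ(x, y)`: a path from `x` to `y` in the graph already has length at least `ρ(x, y)`,
and, because the path has only finitely many vertices, the graph has some further edge, of
positive length. Hence no spanning tree has length `mst(M, ρ) = ρ(x, y)`.
-/

lemma _root_.SimpleGraph.Walk.exists_adj_notMem_edges {V : Type*} [Infinite V] {G : SimpleGraph V}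
    (hG : G.Preconnected) {a b : V} (p : G.Walk a b) :
    ∃ u v, G.Adj u v ∧ s(u, v) ∉ p.edges := by
  classical
  obtain ⟨z, hz⟩ := Infinite.exists_notMem_finset p.support.toFinset
  rw [List.mem_toFinset] at hz
  obtain ⟨q⟩ := hG z a
  cases q with
  | nil => exact absurd p.start_mem_support hz
  | cons huv _ => exact ⟨z, _, huv, fun he => hz (p.fst_mem_support_of_mem_edges he)⟩

section Length

variable [MetricSpace M]

@[simp]
lemma edgeLen_mk (a b : M) : edgeLen s(a, b) = edist a b := rfl

lemma edist_le_sum_edgeLen {G : SimpleGraph M} {a b : M} (w : G.Walk a b) :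
    edist a b ≤ (w.edges.map edgeLen).sum := by
  induction w with
  | nil => simp
  | @cons u v c _ p ih =>
    calc edist u c ≤ edist u v + edist v c := edist_triangle _ _ _
      _ ≤ edist u v + (p.edges.map edgeLen).sum := by gcongr
      _ = ((s(u, v) :: p.edges).map edgeLen).sum := by simp

lemma sum_edgeLen_le_graphLen {G : SimpleGraph M} {l : List (Sym2 M)} (hnd : l.Nodup)
    (hl : ∀ e ∈ l, e ∈ G.edgeSet) : (l.map edgeLen).sum ≤ graphLen G := by
  classical
  rw [graphLen, tsum_subtype]
  calc (l.map edgeLen).sum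
      = ∑ e ∈ l.toFinset, edgeLen e := (List.sum_toFinset _ hnd).symm
    _ = ∑ e ∈ l.toFinset, G.edgeSet.indicator edgeLen e := Finset.sum_congr rfl fun e he =>
        (Set.indicator_of_mem (hl e (List.mem_toFinset.mp he)) edgeLen).symm
    _ ≤ ∑' e, G.edgeSet.indicator edgeLen e := ENNReal.sum_le_tsum _

lemma edist_add_edist_le_graphLen {G : SimpleGraph M} {a b u v : M} (p : G.Walk a b)
    (hp : p.IsPath) (huv : G.Adj u v) (hnot : s(u, v) ∉ p.edges) :
    edist a b + edist u v ≤ graphLen G :=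
  calc edist a b + edist u v ≤ (p.edges.map edgeLen).sum + edist u v := by
        gcongr; exact edist_le_sum_edgeLen p
    _ = ((s(u, v) :: p.edges).map edgeLen).sum := by simp [add_comm]
    _ ≤ graphLen G := by
      refine sum_edgeLen_le_graphLen (List.nodup_cons.mpr ⟨hnot, hp.edges_nodup⟩) ?_
      intro e he
      rcases List.mem_cons.mp he with rfl | he
      exacts [huv, p.edges_subset_edgeSet he]

lemma edist_lt_graphLen [Infinite M] {G : SimpleGraph M} (hG : G.Preconnected)
    (hfin : graphLen G < ⊤) (a b : M) : edist a b < graphLen G := by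
  classical
  obtain ⟨p, hp⟩ := (hG a b).some.toPath
  obtain ⟨u, v, huv, hnot⟩ := p.exists_adj_notMem_edges hG
  have hlen := edist_add_edist_le_graphLen p hp huv hnot
  have hab : edist a b ≠ ⊤ := ne_top_of_le_ne_top hfin.ne (le_self_add.trans hlen)
  calc edist a b < edist a b + edist u v := ENNReal.lt_add_right hab (edist_pos.mpr huv.ne).ne'
    _ ≤ graphLen G := hlen

end Length

/-- If `M` is infinite and some distance `ρ(x,y)` equals the infimum `mst(M, ρ)` of
lengths of spanning trees, then no minimal spanning tree exists. -/
theorem no_mst_of_dist_eq_mst [MetricSpace M] [Infinite M] (x y : M)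
    (h : edist x y = ⨅ T : {G : SimpleGraph M // G.IsTree}, graphLen T.1) :
    ¬ ∃ T : SimpleGraph M, IsMST T := by
  rintro ⟨T, hT, hfin, hmin⟩
  have hle : graphLen T ≤ edist x y := h ▸ le_iInf fun T' => hmin T'.1 T'.2
  exact (edist_lt_graphLen hT.connected.preconnected hfin x y).not_ge hle

end MSTPaper
end

section
/- Let T = (M, E) be a tree, ρ a metric on M, and f ∈ E an exact edge. Let e ∈ E with e ≠ f, let {M₁, M₂} be the partition of M induced by removing e, and suppose ρ(M₁, M₂) = ρ(m₁, m₂) for some m₁ ∈ M₁, m₂ ∈ M₂. Then f is also an exact edge of the tree S = T[e → m₁m₂] obtained from T by deleting e and adding the edge m₁m₂. -/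
open scoped ENNReal

/-!
Let `x` be reachable from `a` and `y` from `b` once `ab` is deleted from `T[cd → m₁m₂]`. If `ab`
separates `x` from `y` in `T`, exactness of `ab` gives `ρ(a, b) ≤ ρ(x, y)`. Otherwise one of the
two walks switches sides of `ab`, which only the new edge `m₁m₂` can do; keeping track of the side
of `cd` as well shows that then `m₁m₂` crosses `ab` and `cd` separates `x` from `y`, whence
`ρ(a, b) ≤ ρ(m₁, m₂) ≤ ρ(x, y)`.
-/

namespace SimpleGraph

variable {V : Type*} {G : SimpleGraph V}

theorem Reachable.iff_of_forall_adj {P : V → Prop} (h : ∀ ⦃x y⦄, G.Adj x y → (P x ↔ P y))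
    {x y : V} (hxy : G.Reachable x y) : P x ↔ P y := by
  obtain ⟨p⟩ := hxy
  induction p with
  | nil => rfl
  | cons hadj _ ih => exact (h hadj).trans ih

theorem Adj.reachable_iff {x y : V} (h : G.Adj x y) (z : V) :
    G.Reachable z x ↔ G.Reachable z y :=
  ⟨fun hz => hz.trans h.reachable, fun hz => hz.trans h.symm.reachable⟩

theorem Preconnected.reachable_deleteEdges_or (hG : G.Preconnected) (u v x : V) :
    (G.deleteEdges {s(u, v)}).Reachable u x ∨ (G.deleteEdges {s(u, v)}).Reachable v x := by
  set R := G.deleteEdges {s(u, v)}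
  refine ((hG u x).iff_of_forall_adj (P := fun z => R.Reachable u z ∨ R.Reachable v z)
    fun y z hyz => ?_).mp (.inl .rfl)
  by_cases hyz' : s(y, z) = s(u, v)
  · obtain ⟨rfl, rfl⟩ | ⟨rfl, rfl⟩ := Sym2.eq_iff.mp hyz' <;> simp
  · have hR : R.Adj y z := deleteEdges_adj.mpr ⟨hyz, hyz'⟩
    rw [hR.reachable_iff u, hR.reachable_iff v]

/-- `T[e → e']` in the paper's notation. -/
def edgeExchange (T : SimpleGraph V) (e e' : Sym2 V) : SimpleGraph V :=
  fromEdgeSet ((T.edgeSet \ {e}) ∪ {e'})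

theorem Adj.of_deleteEdges_edgeExchange {T : SimpleGraph V} {e e' f : Sym2 V} {x y : V}
    (h : ((T.edgeExchange e e').deleteEdges {f}).Adj x y) :
    (T.deleteEdges {f}).Adj x y ∧ (T.deleteEdges {e}).Adj x y ∨ s(x, y) = e' := by
  simp only [edgeExchange, deleteEdges_adj, fromEdgeSet_adj, Set.mem_union, Set.mem_sdiff,
    Set.mem_singleton_iff, mem_edgeSet] at h ⊢
  tauto

end SimpleGraph

namespace MSTPaper

open SimpleGraph (deleteEdges_adj isAcyclic_iff_forall_adj_isBridge isBridge_iff)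

variable {M : Type*}

def Separates (G : SimpleGraph M) (u v x y : M) : Prop :=
  ¬((G.deleteEdges {s(u, v)}).Reachable u x ↔ (G.deleteEdges {s(u, v)}).Reachable u y)

theorem separates_or_of_edgeExchange {T : SimpleGraph M} {a b c d m₁ m₂ x y : M}
    (hab : T.IsBridge s(a, b)) (hcd : T.IsBridge s(c, d)) (hf : T.Adj a b)
    (hne : s(c, d) ≠ s(a, b))
    (hm₁ : (T.deleteEdges {s(c, d)}).Reachable c m₁)
    (hm₂ : (T.deleteEdges {s(c, d)}).Reachable d m₂)
    (hx : ((T.edgeExchange s(c, d) s(m₁, m₂)).deleteEdges {s(a, b)}).Reachable a x)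
    (hy : ((T.edgeExchange s(c, d) s(m₁, m₂)).deleteEdges {s(a, b)}).Reachable b y) :
    Separates T a b x y ∨ (Separates T c d x y ∧ Separates T a b m₁ m₂) := by
  set P := fun z => (T.deleteEdges {s(a, b)}).Reachable a z
  set Q := fun z => (T.deleteEdges {s(c, d)}).Reachable c z
  have hPb : ¬P b := isBridge_iff.mp hab
  have hQm₂ : ¬Q m₂ := fun h => isBridge_iff.mp hcd (h.trans hm₂.symm)
  have hQab : Q a ↔ Q b :=
    (deleteEdges_adj.mpr ⟨hf, fun h => hne (Set.mem_singleton_iff.mp h).symm⟩).reachable_iff c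
  -- The side of `ab` containing `z`, flipped on `d`'s side of `cd` when the new edge `m₁m₂`
  -- crosses `ab`: every edge of `T[cd → m₁m₂]` other than `ab` preserves it.
  let W := fun z => P z ↔ Q z ∨ (P m₁ ↔ P m₂)
  have hW : ∀ ⦃u v⦄, ((T.edgeExchange s(c, d) s(m₁, m₂)).deleteEdges {s(a, b)}).Adj u v →
      (W u ↔ W v) := by
    intro u v huv
    rcases huv.of_deleteEdges_edgeExchange with ⟨hP, hQ⟩ | huv
    · exact iff_congr (hP.reachable_iff a) (or_congr_left (hQ.reachable_iff c))
    · obtain ⟨rfl, rfl⟩ | ⟨rfl, rfl⟩ := Sym2.eq_iff.mp huv <;> grind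
  have hWx := hx.iff_of_forall_adj hW
  have hWy := hy.iff_of_forall_adj hW
  have hPa : P a := .rfl
  show ¬(P x ↔ P y) ∨ (¬(Q x ↔ Q y) ∧ ¬(P m₁ ↔ P m₂))
  grind

theorem setDist_le_edist [MetricSpace M] {A B : Set M} {x y : M} (hx : x ∈ A) (hy : y ∈ B) :
    setDist A B ≤ edist x y :=
  (iInf₂_le x hx).trans (iInf₂_le y hy)

theorem le_setDist [MetricSpace M] {A B : Set M} {r : ℝ≥0∞}
    (h : ∀ x ∈ A, ∀ y ∈ B, r ≤ edist x y) : r ≤ setDist A B :=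
  le_iInf₂ fun x hx => le_iInf₂ fun y hy => h x hx y hy

theorem setDist_le_edist_of_separates [MetricSpace M] {G : SimpleGraph M} (hG : G.Preconnected)
    {u v x y : M} (h : Separates G u v x y) :
    setDist {z | (G.deleteEdges {s(u, v)}).Reachable u z}
      {z | (G.deleteEdges {s(u, v)}).Reachable v z} ≤ edist x y := by
  have hv := fun z => (hG.reachable_deleteEdges_or u v z).resolve_left
  by_cases hx : (G.deleteEdges {s(u, v)}).Reachable u x <;>
    by_cases hy : (G.deleteEdges {s(u, v)}).Reachable u y
  · exact absurd (iff_of_true hx hy) h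
  · exact setDist_le_edist hx (hv y hy)
  · rw [edist_comm]; exact setDist_le_edist hy (hv x hx)
  · exact absurd (iff_of_false hx hy) h

theorem ExactEdge.le_edist_of_separates [MetricSpace M] {G : SimpleGraph M} {u v x y : M}
    (h : ExactEdge G u v) (hG : G.Preconnected) (hxy : Separates G u v x y) :
    edist u v ≤ edist x y :=
  h.trans_le (setDist_le_edist_of_separates hG hxy)

/-- If `f = ab` is an exact edge of a tree `T`, `e = cd` is another edge whose removal
induces the partition `{M₁, M₂}`, and the distance between `M₁` and `M₂` is attained
at `m₁ ∈ M₁`, `m₂ ∈ M₂`, then `f` is an exact edge of `T[e → m₁m₂]` as well. -/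
theorem exact_edge_stable_under_exchange [MetricSpace M] (T : SimpleGraph M)
    (hT : T.IsTree) (a b : M) (hf : T.Adj a b) (hexact : ExactEdge T a b)
    (c d : M) (he : T.Adj c d) (hne : s(c,d) ≠ s(a,b)) (m₁ m₂ : M)
    (hm₁ : (T.deleteEdges {s(c,d)}).Reachable c m₁)
    (hm₂ : (T.deleteEdges {s(c,d)}).Reachable d m₂)
    (hatt : edist m₁ m₂ = setDist {x | (T.deleteEdges {s(c,d)}).Reachable c x}
                                  {x | (T.deleteEdges {s(c,d)}).Reachable d x}) :
    ExactEdge (SimpleGraph.fromEdgeSet ((T.edgeSet \ {s(c,d)}) ∪ {s(m₁,m₂)})) a b := by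
  have hpre := hT.connected.preconnected
  have hab := isAcyclic_iff_forall_adj_isBridge.mp hT.isAcyclic hf
  have hcd := isAcyclic_iff_forall_adj_isBridge.mp hT.isAcyclic he
  refine le_antisymm (le_setDist fun x hx y hy => ?_) (setDist_le_edist .rfl .rfl)
  rcases separates_or_of_edgeExchange hab hcd hf hne hm₁ hm₂ hx hy with hxy | ⟨hxy, hm⟩
  · exact hexact.le_edist_of_separates hpre hxy
  · calc edist a b ≤ edist m₁ m₂ := hexact.le_edist_of_separates hpre hm
      _ ≤ edist x y := hatt.trans_le (setDist_le_edist_of_separates hpre hxy)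

end MSTPaper
end
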